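/- arXiv:2511.05806 — 2 statements merged into one kernel-verified Lean document; each statement's English description precedes it below -/
import Mathlib

section
/- Let S be a free numerical semigroup generated by a telescopic sequence T = (t_0, …, t_k) with gcd(T) = 1, and suppose exactly one term t_m of T is odd (all other terms t_i with i ≠ m are even). Then O(G(S)) − E(G(S)) = (t_m − 1)/2. -/
/-- The monoid `⟨t_0, …, t_{n-1}⟩` of all nonnegative integer linear combinations of
the first `n` terms of the sequence `t`. -/
def genBy (t : ℕ → ℕ) (n : ℕ) : Set ℕ :=
  {s | ∃ x : ℕ → ℕ, s = ∑ i ∈ Finset.range n, x i * t i}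

/-- `d_i = gcd(t_0, …, t_i)`. -/
def seqD (t : ℕ → ℕ) (i : ℕ) : ℕ := Finset.gcd (Finset.range (i + 1)) t

/-- `c_j = d_{j-1} / d_j` (for `j ≥ 1`). -/
def seqC (t : ℕ → ℕ) (j : ℕ) : ℕ := seqD t (j - 1) / seqD t j

/-- The sequence `(t_0, …, t_k)` of positive integers is telescopic if
`c_j · t_j ∈ ⟨t_0, …, t_{j-1}⟩` for every `j = 1, …, k`. -/
def IsTelescopic (t : ℕ → ℕ) (k : ℕ) : Prop :=
  (∀ i ≤ k, 0 < t i) ∧ ∀ j, 1 ≤ j → j ≤ k → seqC t j * t j ∈ genBy t j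

/-- `O(T)`: the number of odd elements of `T`. -/
noncomputable def countOdd (T : Set ℕ) : ℕ := {x ∈ T | Odd x}.ncard

/-- `E(T)`: the number of even elements of `T`. -/
noncomputable def countEven (T : Set ℕ) : ℕ := {x ∈ T | Even x}.ncard


/-!
Write `d = gcd(t_0, …, t_{k-1})`, `τ = t_k` and `S'` for the semigroup generated by the `t_i / d`.
Telescopicity gives `d τ ∈ d S'`, so `S = d S' + {0, τ, …, (d - 1) τ}`, and as `gcd(τ, d) = 1`
the gaps of `S` congruent to `x τ` mod `d` are the numbers below `x τ` and the `x τ + d q` with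
`q` a gap of `S'`. Summing `(-1)^g` over the gaps: if `d` is even (`τ` is the odd generator) the
gaps of `S'` cancel over the `d` classes and an explicit sum gives `(1 - τ) / 2`; if `d` is odd the
sum is `d` times that of `S'` plus `(1 - d) / 2`, and induction on `k` concludes.
-/

open Finset

section Residues

variable {d τ : ℕ}

lemma mapsTo_mul_mod : Set.MapsTo (fun x => x * τ % d) (range d : Set ℕ) (range d : Set ℕ) :=
  fun _ hx => mem_range.2 (Nat.mod_lt _ (Nat.zero_lt_of_lt (mem_range.1 hx)))

lemma injOn_mul_mod (hcop : τ.Coprime d) : Set.InjOn (fun x => x * τ % d) (range d : Set ℕ) := by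
  intro x hx y hy h
  have := Nat.ModEq.cancel_right_of_coprime hcop.symm h
  rwa [Nat.ModEq, Nat.mod_eq_of_lt (mem_range.1 hx), Nat.mod_eq_of_lt (mem_range.1 hy)] at this

lemma surjOn_mul_mod (hcop : τ.Coprime d) :
    Set.SurjOn (fun x => x * τ % d) (range d : Set ℕ) (range d : Set ℕ) :=
  surjOn_of_injOn_of_card_le _ mapsTo_mul_mod (injOn_mul_mod hcop) le_rfl

lemma exists_lt_mul_mod_eq (hcop : τ.Coprime d) (hd : 0 < d) (n : ℕ) :
    ∃ x < d, x * τ % d = n % d := by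
  obtain ⟨x, hx, hxn⟩ := surjOn_mul_mod hcop (mem_range.2 (Nat.mod_lt n hd))
  exact ⟨x, mem_range.1 hx, hxn⟩

lemma sum_range_mul_mod {M : Type*} [AddCommMonoid M] (hcop : τ.Coprime d) (f : ℕ → M) :
    ∑ x ∈ range d, f (x * τ % d) = ∑ x ∈ range d, f x :=
  sum_nbij _ mapsTo_mul_mod (injOn_mul_mod hcop) (surjOn_mul_mod hcop) fun _ _ => rfl

end Residues

section Glue

variable {d τ : ℕ}

def glue (d τ : ℕ) (S : Set ℕ) : Set ℕ := {n | ∃ q ∈ S, ∃ x < d, n = d * q + x * τ}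

def glueGaps (d τ : ℕ) (G : Finset ℕ) : Finset ℕ :=
  (range d).biUnion fun x =>
    (range (x * τ / d)).image (fun j => x * τ % d + d * j) ∪ G.image (fun q => x * τ + d * q)

lemma mem_glueGaps {G : Finset ℕ} {n : ℕ} :
    n ∈ glueGaps d τ G ↔
      ∃ x < d, (∃ j < x * τ / d, x * τ % d + d * j = n) ∨ ∃ q ∈ G, x * τ + d * q = n := by
  simp [glueGaps]

lemma exists_eq_of_mem_glue (hcop : τ.Coprime d) {S : Set ℕ} {n x : ℕ} (hn : n ∈ glue d τ S)
    (hx : x < d) (hmod : x * τ % d = n % d) : ∃ q ∈ S, n = d * q + x * τ := by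
  obtain ⟨q, hq, y, hy, rfl⟩ := hn
  obtain rfl : y = x :=
    injOn_mul_mod hcop (mem_range.2 hy) (mem_range.2 hx) (by simpa using hmod.symm)
  exact ⟨q, hq, rfl⟩

lemma coe_glueGaps (hcop : τ.Coprime d) (hd : 0 < d) {S : Set ℕ} {G : Finset ℕ}
    (hG : (G : Set ℕ) = Sᶜ) : (glueGaps d τ G : Set ℕ) = (glue d τ S)ᶜ := by
  ext n
  have hn := Nat.mod_add_div n d
  simp only [mem_coe, Set.mem_compl_iff, mem_glueGaps]
  constructor
  · rintro ⟨x, hx, ⟨j, hj, rfl⟩ | ⟨q, hq, rfl⟩⟩ hmem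
    · obtain ⟨q, -, hq⟩ := exists_eq_of_mem_glue hcop hmem hx (by simp)
      have hxτ := Nat.mod_add_div (x * τ) d
      have : d * j < d * (x * τ / d) := Nat.mul_lt_mul_of_pos_left hj hd
      omega
    · obtain ⟨q', hq', h⟩ := exists_eq_of_mem_glue hcop hmem hx (by simp)
      obtain rfl : q = q' := Nat.eq_of_mul_eq_mul_left hd (by omega)
      exact (hG ▸ hq : q ∈ Sᶜ) hq'
  · intro hnS
    obtain ⟨x, hx, hmod⟩ := exists_lt_mul_mod_eq hcop hd n
    have hxτ := Nat.mod_add_div (x * τ) d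
    refine ⟨x, hx, ?_⟩
    rcases lt_or_ge (n / d) (x * τ / d) with hlt | hge
    · exact Or.inl ⟨n / d, hlt, by omega⟩
    · have hle : d * (x * τ / d) ≤ d * (n / d) := Nat.mul_le_mul_left d hge
      have heq : x * τ + d * (n / d - x * τ / d) = n := by rw [Nat.mul_sub]; omega
      refine Or.inr ⟨n / d - x * τ / d, ?_, heq⟩
      rw [← mem_coe, hG]
      exact fun hq => hnS ⟨_, hq, x, hx, by omega⟩

lemma sum_glueGaps {M : Type*} [AddCommMonoid M] (hcop : τ.Coprime d) (hd : 0 < d)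
    (G : Finset ℕ) (f : ℕ → M) :
    ∑ n ∈ glueGaps d τ G, f n = ∑ x ∈ range d,
      (∑ j ∈ range (x * τ / d), f (x * τ % d + d * j) + ∑ q ∈ G, f (x * τ + d * q)) := by
  have hmod : ∀ x n, n ∈ (range (x * τ / d)).image (fun j => x * τ % d + d * j) ∪
      G.image (fun q => x * τ + d * q) → n % d = x * τ % d := by
    intro x n hn
    simp only [mem_union, mem_image] at hn
    rcases hn with ⟨j, -, rfl⟩ | ⟨q, -, rfl⟩ <;> simp
  rw [glueGaps, sum_biUnion]
  · refine sum_congr rfl fun x _ => ?_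
    have hxτ := Nat.mod_add_div (x * τ) d
    rw [sum_union, sum_image, sum_image]
    · exact fun a _ b _ h => Nat.eq_of_mul_eq_mul_left hd (by simpa using h)
    · exact fun a _ b _ h => Nat.eq_of_mul_eq_mul_left hd (by simpa using h)
    · rw [disjoint_left]
      simp only [mem_image, mem_range, not_exists, not_and]
      rintro n ⟨j, hj, rfl⟩ q _ h
      have : d * j < d * (x * τ / d) := Nat.mul_lt_mul_of_pos_left hj hd
      omega
  · intro x hx y hy hxy
    refine disjoint_left.2 fun n hnx hny => hxy (injOn_mul_mod hcop hx hy ?_)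
    simp only [← hmod x n hnx, ← hmod y n hny]

end Glue

section Parity

variable {d τ : ℕ}

lemma two_mul_sum_range_neg_one_pow (M : ℕ) :
    2 * ∑ j ∈ range M, (-1 : ℤ) ^ j = 1 - (-1) ^ M := by
  linear_combination -geom_sum_mul (-1 : ℤ) M

lemma two_mul_sum_range_neg_one_pow_mul_self (hd : Even d) :
    2 * ∑ x ∈ range d, (-1 : ℤ) ^ x * x = -d := by
  obtain ⟨e, rfl⟩ := hd
  induction e with
  | zero => simp
  | succ e ih =>
    rw [show e + 1 + (e + 1) = e + e + 1 + 1 by ring, sum_range_succ, sum_range_succ,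
      pow_succ, Even.neg_one_pow ⟨e, rfl⟩]
    push_cast at ih ⊢
    linear_combination ih

lemma two_mul_sum_neg_one_pow_glueGaps_of_even (hcop : τ.Coprime d) (hd : 0 < d)
    (hde : Even d) (hτ : Odd τ) (G : Finset ℕ) :
    2 * ∑ n ∈ glueGaps d τ G, (-1 : ℤ) ^ n = 1 - τ := by
  have hshift : ∀ a b, (-1 : ℤ) ^ (a + d * b) = (-1) ^ a := fun a b => by
    rw [pow_add, pow_mul, hde.neg_one_pow, one_pow, mul_one]
  have hmul : ∀ x, (-1 : ℤ) ^ (x * τ) = (-1) ^ x := fun x => by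
    rw [pow_mul', hτ.neg_one_pow]
  have hmod : ∀ x, (-1 : ℤ) ^ (x * τ % d) = (-1) ^ x := fun x => by
    rw [← hshift _ (x * τ / d), Nat.mod_add_div, hmul]
  -- `d * (x τ / d) = x τ - x τ % d`, and `x ↦ x τ % d` permutes `range d`.
  have hW : (d : ℤ) * ∑ x ∈ range d, ((x * τ / d : ℕ) : ℤ) * (-1) ^ x =
      (τ - 1) * ∑ x ∈ range d, (-1 : ℤ) ^ x * x := by
    have hterm : ∀ x, (d : ℤ) * ((x * τ / d : ℕ) * (-1) ^ x) =
        τ * ((-1) ^ x * x) - (-1) ^ (x * τ % d) * (x * τ % d : ℕ) := fun x => by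
      have := congrArg (Nat.cast (R := ℤ)) (Nat.mod_add_div (x * τ) d)
      simp only [Nat.cast_add, Nat.cast_mul] at this
      rw [hmod]
      linear_combination (-1 : ℤ) ^ x * this
    rw [mul_sum, sum_congr rfl fun x _ => hterm x, sum_sub_distrib, ← mul_sum,
      sum_range_mul_mod hcop fun r => (-1 : ℤ) ^ r * r]
    ring
  have hzero : ∑ x ∈ range d, (-1 : ℤ) ^ x = 0 := by simp [neg_one_geom_sum, hde]
  rw [sum_glueGaps hcop hd]
  simp only [hshift, hmod, hmul, sum_const, card_range, nsmul_eq_mul, sum_add_distrib, ← mul_sum]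
  refine mul_left_cancel₀ (Nat.cast_ne_zero.2 hd.ne' : (d : ℤ) ≠ 0) ?_
  linear_combination 2 * hW + (τ - 1) * two_mul_sum_range_neg_one_pow_mul_self hde +
    2 * d * #G * hzero

lemma two_mul_sum_neg_one_pow_glueGaps_of_odd (hcop : τ.Coprime d) (hd : 0 < d)
    (hdo : Odd d) (hτ : Even τ) (G : Finset ℕ) :
    2 * ∑ n ∈ glueGaps d τ G, (-1 : ℤ) ^ n = d * (2 * ∑ q ∈ G, (-1 : ℤ) ^ q) + 1 - d := by
  have hshift : ∀ a b, (-1 : ℤ) ^ (a + d * b) = (-1) ^ a * (-1) ^ b := fun a b => by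
    rw [pow_add, pow_mul, hdo.neg_one_pow]
  have hmul : ∀ x, (-1 : ℤ) ^ (x * τ) = 1 := fun x => by
    rw [pow_mul', hτ.neg_one_pow, one_pow]
  -- `x * τ % d` and `x * τ / d` have the same parity, so the gaps below `x * τ` contribute
  -- `-1` or `0` according to that parity.
  have hblock : ∀ x, 2 * (∑ j ∈ range (x * τ / d), (-1 : ℤ) ^ (x * τ % d + d * j) +
      ∑ q ∈ G, (-1 : ℤ) ^ (x * τ + d * q)) = (-1) ^ (x * τ % d) - 1 + 2 * ∑ q ∈ G, (-1) ^ q := by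
    intro x
    have hpar : (-1 : ℤ) ^ (x * τ % d) * (-1) ^ (x * τ / d) = 1 := by
      rw [← hshift, Nat.mod_add_div, hmul]
    simp only [hshift, hmul, one_mul, ← mul_sum]
    linear_combination (-1 : ℤ) ^ (x * τ % d) * two_mul_sum_range_neg_one_pow (x * τ / d) - hpar
  have hone : ∑ r ∈ range d, (-1 : ℤ) ^ r = 1 := by
    simp [neg_one_geom_sum, Nat.not_even_iff_odd.2 hdo]
  rw [sum_glueGaps hcop hd, mul_sum, sum_congr rfl fun x _ => hblock x, sum_add_distrib,
    sum_sub_distrib, sum_range_mul_mod hcop fun r => (-1 : ℤ) ^ r]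
  simp only [sum_const, card_range, nsmul_eq_mul, mul_one]
  linear_combination hone

end Parity

section GenBy

variable {t : ℕ → ℕ} {n : ℕ}

lemma add_mem_genBy {a b : ℕ} (ha : a ∈ genBy t n) (hb : b ∈ genBy t n) :
    a + b ∈ genBy t n := by
  obtain ⟨x, rfl⟩ := ha
  obtain ⟨y, rfl⟩ := hb
  exact ⟨x + y, by simp only [Pi.add_apply, add_mul, sum_add_distrib]⟩

lemma mul_mem_genBy (c : ℕ) {a : ℕ} (ha : a ∈ genBy t n) : c * a ∈ genBy t n := by
  obtain ⟨x, rfl⟩ := ha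
  exact ⟨c • x, by simp only [mul_sum, Pi.smul_apply, smul_eq_mul, mul_assoc]⟩

lemma genBy_one (h : t 0 = 1) : genBy t 1 = Set.univ :=
  Set.eq_univ_of_forall fun s => ⟨fun _ => s, by simp [h]⟩

lemma mem_genBy_succ {s : ℕ} :
    s ∈ genBy t (n + 1) ↔ ∃ a ∈ genBy t n, ∃ x, s = a + x * t n := by
  constructor
  · rintro ⟨y, rfl⟩
    exact ⟨_, ⟨y, rfl⟩, y n, sum_range_succ _ _⟩
  · rintro ⟨_, ⟨y, rfl⟩, x, rfl⟩
    refine ⟨Function.update y n x, ?_⟩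
    rw [sum_range_succ, Function.update_self]
    congr 1
    exact sum_congr rfl fun i hi => by rw [Function.update_of_ne (mem_range.1 hi).ne]

lemma mem_genBy_succ_iff_of_mul_mem {c s : ℕ} (hc : c * t n ∈ genBy t n) (hc0 : 0 < c) :
    s ∈ genBy t (n + 1) ↔ ∃ a ∈ genBy t n, ∃ x < c, s = a + x * t n := by
  rw [mem_genBy_succ]
  constructor
  · rintro ⟨a, ha, x, rfl⟩
    refine ⟨a + x / c * (c * t n), add_mem_genBy ha (mul_mem_genBy _ hc), x % c,
      Nat.mod_lt x hc0, ?_⟩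
    conv_lhs => rw [← Nat.div_add_mod x c]
    ring
  · rintro ⟨a, ha, x, -, rfl⟩
    exact ⟨a, ha, x, rfl⟩

lemma genBy_eq_image_mul {t' : ℕ → ℕ} {d : ℕ} (h : ∀ i < n, t i = d * t' i) :
    genBy t n = (d * ·) '' genBy t' n := by
  have hsum : ∀ x : ℕ → ℕ, ∑ i ∈ range n, x i * t i = d * ∑ i ∈ range n, x i * t' i :=
    fun x => by
      rw [mul_sum]
      exact sum_congr rfl fun i hi => by rw [h i (mem_range.1 hi)]; ring
  ext s
  constructor
  · rintro ⟨x, rfl⟩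
    exact ⟨_, ⟨x, rfl⟩, (hsum x).symm⟩
  · rintro ⟨_, ⟨x, rfl⟩, rfl⟩
    exact ⟨x, (hsum x).symm⟩

end GenBy

section Telescopic

variable {t : ℕ → ℕ} {k : ℕ}

lemma seqD_dvd {i : ℕ} (h : i ≤ k) : seqD t k ∣ t i :=
  Finset.gcd_dvd (mem_range.2 (Nat.lt_succ_of_le h))

lemma seqD_zero : seqD t 0 = t 0 := by
  simp [seqD]

lemma seqD_succ : seqD t (k + 1) = Nat.gcd (t (k + 1)) (seqD t k) := by
  rw [seqD, range_add_one, gcd_insert]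
  rfl

lemma seqD_pos (h : 0 < t 0) (k : ℕ) : 0 < seqD t k :=
  Nat.pos_of_dvd_of_pos (seqD_dvd (Nat.zero_le k)) h

lemma seqD_eq_mul {t' : ℕ → ℕ} {d : ℕ} (h : ∀ j ≤ k, t j = d * t' j) :
    seqD t k = d * seqD t' k := by
  rw [seqD, seqD, Finset.gcd_congr rfl fun j hj => h j (Nat.lt_succ_iff.1 (mem_range.1 hj)),
    Finset.gcd_mul_left]
  simp

lemma even_seqD (h : ∀ i ≤ k, Even (t i)) : Even (seqD t k) :=
  even_iff_two_dvd.2 <| Finset.dvd_gcd fun i hi =>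
    (h i (Nat.lt_succ_iff.1 (mem_range.1 hi))).two_dvd

lemma coprime_seqD (hgcd : seqD t (k + 1) = 1) : (t (k + 1)).Coprime (seqD t k) := by
  rw [Nat.Coprime, ← seqD_succ, hgcd]

def quotSeq (t : ℕ → ℕ) (k i : ℕ) : ℕ := t i / seqD t k

lemma seqD_mul_quotSeq {i : ℕ} (h : i ≤ k) : seqD t k * quotSeq t k i = t i :=
  Nat.mul_div_cancel' (seqD_dvd h)

lemma seqD_quotSeq (h0 : 0 < t 0) (k : ℕ) : seqD (quotSeq t k) k = 1 := by
  have := seqD_eq_mul (t' := quotSeq t k) fun j hj => (seqD_mul_quotSeq hj).symm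
  exact (Nat.mul_eq_left (seqD_pos h0 k).ne').1 this.symm

lemma isTelescopic_quotSeq (htel : IsTelescopic t (k + 1)) : IsTelescopic (quotSeq t k) k := by
  have hd := seqD_pos (htel.1 0 (Nat.zero_le _)) k
  have ht : ∀ i ≤ k, t i = seqD t k * quotSeq t k i := fun i hi => (seqD_mul_quotSeq hi).symm
  refine ⟨fun i hi => Nat.pos_of_mul_pos_left (ht i hi ▸ htel.1 i (by omega)), fun j hj1 hjk => ?_⟩
  have hC : seqC (quotSeq t k) j = seqC t j := by
    rw [seqC, seqC, seqD_eq_mul fun i hi => ht i (by omega),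
      seqD_eq_mul (k := j) fun i hi => ht i (by omega), Nat.mul_div_mul_left _ _ hd]
  have hmem := htel.2 j hj1 (by omega)
  rw [genBy_eq_image_mul fun i hi => ht i (by omega), ht j hjk] at hmem
  obtain ⟨s, hs, hds⟩ := hmem
  have hs' : seqC t j * quotSeq t k j = s := Nat.eq_of_mul_eq_mul_left hd (by simp only at hds; rw [hds]; ring)
  rwa [hC, hs']

lemma genBy_eq_glue (htel : IsTelescopic t (k + 1)) (hgcd : seqD t (k + 1) = 1) :
    genBy t (k + 2) = glue (seqD t k) (t (k + 1)) (genBy (quotSeq t k) (k + 1)) := by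
  have hd := seqD_pos (htel.1 0 (Nat.zero_le _)) k
  have hc : seqC t (k + 1) = seqD t k := by simp [seqC, hgcd]
  have hmem := htel.2 (k + 1) (by omega) le_rfl
  rw [hc] at hmem
  ext s
  rw [mem_genBy_succ_iff_of_mul_mem hmem hd,
    genBy_eq_image_mul fun i hi => (seqD_mul_quotSeq (Nat.lt_succ_iff.1 hi)).symm]
  constructor
  · rintro ⟨_, ⟨q, hq, rfl⟩, x, hx, rfl⟩
    exact ⟨q, hq, x, hx, rfl⟩
  · rintro ⟨q, hq, x, hx, rfl⟩
    exact ⟨_, ⟨q, hq, rfl⟩, x, hx, rfl⟩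

end Telescopic

lemma exists_finset_coe_eq_compl_genBy {t : ℕ → ℕ} {k : ℕ} (htel : IsTelescopic t k)
    (hgcd : seqD t k = 1) : ∃ G : Finset ℕ, (G : Set ℕ) = (genBy t (k + 1))ᶜ := by
  induction k generalizing t with
  | zero => exact ⟨∅, by rw [genBy_one (seqD_zero.symm.trans hgcd)]; simp⟩
  | succ k ih =>
    have h0 := htel.1 0 (Nat.zero_le _)
    obtain ⟨G, hG⟩ := ih (isTelescopic_quotSeq htel) (seqD_quotSeq h0 k)
    exact ⟨glueGaps _ _ G, by
      rw [genBy_eq_glue htel hgcd, coe_glueGaps (coprime_seqD hgcd) (seqD_pos h0 k) hG]⟩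

lemma two_mul_sum_neg_one_pow_gaps {t : ℕ → ℕ} {k m : ℕ} (htel : IsTelescopic t k)
    (hgcd : seqD t k = 1) (hmk : m ≤ k) (hmodd : Odd (t m))
    (heven : ∀ i ≤ k, i ≠ m → Even (t i)) {G : Finset ℕ}
    (hG : (G : Set ℕ) = (genBy t (k + 1))ᶜ) :
    2 * ∑ g ∈ G, (-1 : ℤ) ^ g = 1 - t m := by
  induction k generalizing t m G with
  | zero =>
    obtain rfl : m = 0 := Nat.le_zero.1 hmk
    rw [seqD_zero] at hgcd
    rw [genBy_one hgcd, Set.compl_univ, coe_eq_empty] at hG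
    simp [hG, hgcd]
  | succ k ih =>
    have h0 := htel.1 0 (Nat.zero_le _)
    have hd := seqD_pos h0 k
    have hcop := coprime_seqD hgcd
    obtain ⟨G', hG'⟩ :=
      exists_finset_coe_eq_compl_genBy (isTelescopic_quotSeq htel) (seqD_quotSeq h0 k)
    obtain rfl : G = glueGaps (seqD t k) (t (k + 1)) G' := coe_injective <| by
      rw [hG, genBy_eq_glue htel hgcd, coe_glueGaps hcop hd hG']
    rcases eq_or_ne m (k + 1) with rfl | hm
    · exact two_mul_sum_neg_one_pow_glueGaps_of_even hcop hd
        (even_seqD fun i hi => heven i (by omega) (by omega)) hmodd G'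
    have hmk' : m ≤ k := by omega
    have hdo : Odd (seqD t k) := hmodd.of_dvd_nat (seqD_dvd hmk')
    have hq : ∀ i ≤ k, t i = seqD t k * quotSeq t k i := fun i hi => (seqD_mul_quotSeq hi).symm
    have hqodd : Odd (quotSeq t k m) := (Nat.odd_mul.1 (hq m hmk' ▸ hmodd)).2
    have hqeven : ∀ i ≤ k, i ≠ m → Even (quotSeq t k i) := fun i hi him =>
      (Nat.even_mul.1 (hq i hi ▸ heven i (by omega) him)).resolve_left
        (Nat.not_even_iff_odd.2 hdo)
    rw [two_mul_sum_neg_one_pow_glueGaps_of_odd hcop hd hdo (heven _ le_rfl hm.symm),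
      ih (isTelescopic_quotSeq htel) (seqD_quotSeq h0 k) hmk' hqodd hqeven hG', hq m hmk']
    push_cast
    ring

lemma countOdd_sub_countEven (G : Finset ℕ) :
    (countOdd G : ℤ) - countEven G = -∑ g ∈ G, (-1 : ℤ) ^ g := by
  have hodd : countOdd G = #(G.filter Odd) := by simp [countOdd, ← Set.ncard_coe_finset]
  have heven : countEven G = #(G.filter Even) := by simp [countEven, ← Set.ncard_coe_finset]
  rw [hodd, heven, ← sum_filter_add_sum_filter_not G Even,
    sum_congr rfl fun g hg => (mem_filter.1 hg).2.neg_one_pow,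
    sum_congr rfl fun g hg => (Nat.not_even_iff_odd.1 (mem_filter.1 hg).2).neg_one_pow]
  simp only [sum_const, nsmul_eq_mul, Nat.not_even_iff_odd]
  ring

/-- For `S` free generated by telescopic `T = (t_0, …, t_k)` with `gcd T = 1`, if exactly
one term `t_m` is odd (all terms `t_i` with `i ≠ m` are even), then
`O(G(S)) - E(G(S)) = (t_m - 1)/2`. -/
theorem parity_free_one_odd (t : ℕ → ℕ) (k : ℕ) (htel : IsTelescopic t k)
    (hgcd : seqD t k = 1)
    (m : ℕ) (hmk : m ≤ k) (hmodd : Odd (t m))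
    (heven : ∀ i ≤ k, i ≠ m → Even (t i)) :
    (countOdd (genBy t (k + 1))ᶜ : ℤ) - (countEven (genBy t (k + 1))ᶜ : ℤ)
      = ((t m : ℤ) - 1) / 2 := by
  obtain ⟨G, hG⟩ := exists_finset_coe_eq_compl_genBy htel hgcd
  have hsum := two_mul_sum_neg_one_pow_gaps htel hgcd hmk hmodd heven hG
  rw [← hG, countOdd_sub_countEven]
  omega
end

section
/- Let T = (t_0, …, t_k) be a telescopic sequence of positive integers with gcd(T) = 1 and c(T) = (c_1, …, c_k), and suppose t_0 is even. Let m = min{0 ≤ i ≤ k : t_i is odd}. Then t_0, …, t_{m−1} are all even, c_m is even, c_{m+1}, …, c_k are all odd, and m is the unique index i with 0 ≤ i ≤ k such that t_i is odd and c_i is even (where c_0 = 1). -/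
lemma seqD_dvd_t (t : ℕ → ℕ) {i j : ℕ} (h : j ≤ i) : seqD t i ∣ t j :=
  Finset.gcd_dvd (Finset.mem_range.mpr (Nat.lt_succ_of_le h))

lemma seqD_dvd_seqD (t : ℕ → ℕ) {i j : ℕ} (h : i ≤ j) : seqD t j ∣ seqD t i :=
  Finset.dvd_gcd fun b hb =>
    Finset.gcd_dvd (Finset.mem_range.mpr (lt_of_lt_of_le (Finset.mem_range.mp hb) (by omega)))

lemma seqC_mul (t : ℕ → ℕ) (j : ℕ) : seqC t j * seqD t j = seqD t (j - 1) :=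
  Nat.div_mul_cancel (seqD_dvd_seqD t (Nat.sub_le j 1))

/-- For `T = (t_0, …, t_k)` telescopic with `gcd T = 1` and `t_0` even, with `m` the
least index such that `t_m` is odd: `t_0, …, t_{m-1}` are even, `c_m` is even,
`c_{m+1}, …, c_k` are odd, and `m` is the unique index `0 ≤ i ≤ k` with `t_i` odd and
`c_i` even (where `c_0 = 1`). -/
theorem parity_of_seqC (t : ℕ → ℕ) (k : ℕ) (htel : IsTelescopic t k)
    (hgcd : seqD t k = 1) (h0 : Even (t 0))
    (m : ℕ) (hmk : m ≤ k) (hmodd : Odd (t m)) (hmmin : ∀ i < m, Even (t i)) :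
    (∀ i < m, Even (t i)) ∧ Even (seqC t m) ∧
      (∀ i, m < i → i ≤ k → Odd (seqC t i)) ∧
      (∀ i ≤ k, (Odd (t i) ∧ Even (if i = 0 then 1 else seqC t i)) ↔ i = m) := by
  have hm0 : m ≠ 0 := by
    intro h
    exact (Nat.not_odd_iff_even.mpr h0) (h ▸ hmodd)
  -- d_{m-1} is even
  have hdm1_even : Even (seqD t (m - 1)) := by
    rw [even_iff_two_dvd]
    exact Finset.dvd_gcd fun b hb => even_iff_two_dvd.mp
      (hmmin b (by have := Finset.mem_range.mp hb; omega))
  -- d_i is odd for i ≥ m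
  have hd_odd : ∀ i, m ≤ i → Odd (seqD t i) := by
    intro i hi
    rcases Nat.even_or_odd (seqD t i) with he | ho
    · exfalso
      have : Even (t m) :=
        even_iff_two_dvd.mpr ((even_iff_two_dvd.mp he).trans (seqD_dvd_t t hi))
      exact Nat.not_even_iff_odd.mpr hmodd this
    · exact ho
  have hcm : Even (seqC t m) := by
    have h := seqC_mul t m
    have : Even (seqC t m * seqD t m) := h ▸ hdm1_even
    rcases Nat.even_mul.mp this with h' | h'
    · exact h'
    · exact absurd h' (Nat.not_even_iff_odd.mpr (hd_odd m le_rfl))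
  have hafter : ∀ i, m < i → i ≤ k → Odd (seqC t i) := by
    intro i hmi hik
    have h := seqC_mul t i
    have hodd : Odd (seqD t (i - 1)) := hd_odd (i - 1) (by omega)
    have : Odd (seqC t i * seqD t i) := h ▸ hodd
    exact (Nat.odd_mul.mp this).1
  refine ⟨hmmin, hcm, hafter, ?_⟩
  intro i hik
  constructor
  · rintro ⟨hti, hci⟩
    by_contra hne
    rcases lt_trichotomy i m with h | h | h
    · exact Nat.not_odd_iff_even.mpr (hmmin i h) hti
    · exact hne h
    · have : i ≠ 0 := by omega
      rw [if_neg this] at hci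
      exact Nat.not_odd_iff_even.mpr hci (hafter i h hik)
  · rintro rfl
    exact ⟨hmodd, by rw [if_neg hm0]; exact hcm⟩
end
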